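/- Let L : 𝕊ⁿ → 𝕊ⁿ, L(Z) = ZÂ + ÂᵀZ + Σ_{l=1}^r Ĉ_lᵀZĈ_l. Suppose there exist matrices E_l ∈ ℝ^{q×n} (0 ≤ l ≤ r) and Θ ∈ ℝ^{n×q} such that the system (Â + ΘE₀, Ĉ₁ + ΘE₁, …, Ĉ_r + ΘE_r) is mean-square stable, and suppose Z ∈ 𝕊ⁿ, Z ⪰ 0 satisfies L(Z) + Σ_{l=0}^r E_lᵀE_l = 0. Then the system (Â, Ĉ₁, …, Ĉ_r) is mean-square stable. -/

import Mathlib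

/-!
Take `P ≻ 0` with `L_Θ(P) ≺ 0` for the closed-loop system `(Â + ΘE₀, Ĉₗ + ΘEₗ)` and try
`Z + εP` as a Lyapunov matrix for `(Â, Ĉₗ)`. Expanding `L_Θ(P)` around `L(P)` and completing
squares with `Fₗ = ΘᵀPĈₗ` (`F₀ = ΘᵀP`) gives
`-L(Z + εP) = Σₗ (Eₗ + εFₗ)ᵀ(Eₗ + εFₗ) + ε Σₗ (ΘEₗ)ᵀP(ΘEₗ) + ε (-L_Θ(P) - ε Σₗ FₗᵀFₗ)`,
whose last term is positive definite for small `ε > 0` since `-L_Θ(P) ≻ 0`.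
-/

open Matrix

/-- Mean-square stability via the stochastic Lyapunov criterion (equivalent to
`E[X(t)ᵀX(t)] → 0` for the system `dX = AXdt + Σ_l C_lXdw_l`). -/
def MeanSquareStable {n : ℕ} (r : ℕ) (A : Matrix (Fin n) (Fin n) ℝ)
    (C : Fin r → Matrix (Fin n) (Fin n) ℝ) : Prop :=
  ∃ Z : Matrix (Fin n) (Fin n) ℝ, Z.PosDef ∧
    (-(Z * A + Aᵀ * Z + ∑ l, (C l)ᵀ * Z * C l)).PosDef

open Filter Topology

theorem Matrix.posSemidef_transpose_mul_self {ι ο : Type*} [Fintype ι] [Fintype ο]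
    (F : Matrix ο ι ℝ) : (Fᵀ * F).PosSemidef := by
  simpa only [conjTranspose_eq_transpose_of_trivial] using posSemidef_conjTranspose_mul_self F

theorem Matrix.transpose_mul_self_add_smul {ι ο : Type*} [Fintype ο] (G F : Matrix ο ι ℝ)
    (ε : ℝ) :
    (G + ε • F)ᵀ * (G + ε • F) = Gᵀ * G + ε • (Fᵀ * G + Gᵀ * F) + ε ^ 2 • (Fᵀ * F) := by
  simp only [transpose_add, transpose_smul, Matrix.add_mul, Matrix.mul_add, Matrix.smul_mul,
    Matrix.mul_smul, smul_add, smul_smul]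
  module

theorem Matrix.PosDef.eventually_sub_smul {ι : Type*} [Fintype ι] {S N : Matrix ι ι ℝ}
    (hS : S.PosDef) (hN : N.IsHermitian) : ∀ᶠ ε in 𝓝 (0 : ℝ), (S - ε • N).PosDef := by
  set q : ℝ → (ι → ℝ) → ℝ := fun ε x => x ⬝ᵥ ((S - ε • N) *ᵥ x)
  have hq : Continuous fun p : ℝ × (ι → ℝ) => q p.1 p.2 := by
    simp only [q, sub_mulVec, smul_mulVec, dotProduct_sub, dotProduct_smul, smul_eq_mul]
    fun_prop
  -- tube lemma: positivity at `ε = 0` on the compact unit sphere persists for small `ε`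
  have hsphere : ∀ᶠ ε in 𝓝 (0 : ℝ), ∀ u ∈ Metric.sphere (0 : ι → ℝ) 1, 0 < q ε u := by
    refine (isCompact_sphere 0 1).eventually_forall_of_forall_eventually fun u hu => ?_
    have hu0 : u ≠ 0 := ne_zero_of_mem_unit_sphere ⟨u, hu⟩
    have hqu : 0 < q 0 u := by simpa [q] using hS.dotProduct_mulVec_pos hu0
    exact (hq.isOpen_preimage _ isOpen_Ioi).mem_nhds hqu
  filter_upwards [hsphere] with ε hε
  refine .of_dotProduct_mulVec_pos (hS.isHermitian.sub (hN.smul (.all ε))) fun x hx => ?_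
  have hx' : ‖x‖ ≠ 0 := norm_ne_zero_iff.mpr hx
  have hu : ‖x‖⁻¹ • x ∈ Metric.sphere (0 : ι → ℝ) 1 := by simp [norm_smul, hx']
  have hqx := hε _ hu
  simp only [q, mulVec_smul, dotProduct_smul, smul_dotProduct, smul_eq_mul] at hqx
  simpa using pos_of_mul_pos_right (pos_of_mul_pos_right hqx (by positivity)) (by positivity)

variable {ι κ ο : Type*} [Fintype ι] [Fintype κ] [Fintype ο]

def lyapunovOp (A : Matrix ι ι ℝ) (C : κ → Matrix ι ι ℝ) : Matrix ι ι ℝ →ₗ[ℝ] Matrix ι ι ℝ where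
  toFun Z := Z * A + Aᵀ * Z + ∑ l, (C l)ᵀ * Z * C l
  map_add' X Y := by
    simp only [Matrix.add_mul, Matrix.mul_add, Finset.sum_add_distrib]
    abel
  map_smul' c X := by
    simp only [Matrix.smul_mul, Matrix.mul_smul, Finset.smul_sum, smul_add, RingHom.id_apply]

theorem lyapunovOp_feedback (A : Matrix ι ι ℝ) (C : κ → Matrix ι ι ℝ) (Θ : Matrix ι ο ℝ)
    (E₀ : Matrix ο ι ℝ) (E : κ → Matrix ο ι ℝ) {P : Matrix ι ι ℝ} (hP : Pᵀ = P) :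
    lyapunovOp (A + Θ * E₀) (fun l => C l + Θ * E l) P =
      lyapunovOp A C P + ((Θᵀ * P)ᵀ * E₀ + E₀ᵀ * (Θᵀ * P))
        + ∑ l, ((Θᵀ * P * C l)ᵀ * E l + (E l)ᵀ * (Θᵀ * P * C l)
          + (Θ * E l)ᵀ * P * (Θ * E l)) := by
  simp only [lyapunovOp, LinearMap.coe_mk, AddHom.coe_mk, transpose_add, transpose_mul,
    transpose_transpose, hP, Matrix.add_mul, Matrix.mul_add, Matrix.mul_assoc,
    Finset.sum_add_distrib]
  abel

theorem neg_lyapunovOp_add_smul_eq (A : Matrix ι ι ℝ) (C : κ → Matrix ι ι ℝ)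
    (Θ : Matrix ι ο ℝ) (E₀ : Matrix ο ι ℝ) (E : κ → Matrix ο ι ℝ) {Z P : Matrix ι ι ℝ}
    (hZ : lyapunovOp A C Z + (E₀ᵀ * E₀ + ∑ l, (E l)ᵀ * E l) = 0) (hP : Pᵀ = P) (ε : ℝ) :
    -lyapunovOp A C (Z + ε • P) =
      (E₀ + ε • (Θᵀ * P))ᵀ * (E₀ + ε • (Θᵀ * P))
        + ∑ l, (E l + ε • (Θᵀ * P * C l))ᵀ * (E l + ε • (Θᵀ * P * C l))
        + ε • ∑ l, (Θ * E l)ᵀ * P * (Θ * E l)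
        + ε • (-lyapunovOp (A + Θ * E₀) (fun l => C l + Θ * E l) P
          - ε • ((Θᵀ * P)ᵀ * (Θᵀ * P) + ∑ l, (Θᵀ * P * C l)ᵀ * (Θᵀ * P * C l))) := by
  rw [map_add, map_smul, eq_neg_of_add_eq_zero_left hZ, lyapunovOp_feedback A C Θ E₀ E hP]
  simp only [transpose_mul_self_add_smul, Finset.sum_add_distrib, ← Finset.smul_sum]
  module

/-- stochastic detectability implies stability.  If the
observation system `[E₀, …, E_r; Â, Ĉ₁, …, Ĉ_r]` is stochastically detectable
(there is `Θ` making `(Â + ΘE₀, Ĉ₁ + ΘE₁, …, Ĉ_r + ΘE_r)` mean-square stable)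
and some `Z ⪰ 0` solves `L(Z) + Σ_{l=0}^r E_lᵀE_l = 0` with
`L(Z) = ZÂ + ÂᵀZ + Σ_l Ĉ_lᵀZĈ_l`, then `(Â, Ĉ₁, …, Ĉ_r)` is mean-square
stable. -/
theorem detectability_implies_stability (n q r : ℕ)
    (Ahat : Matrix (Fin n) (Fin n) ℝ)
    (Chat : Fin r → Matrix (Fin n) (Fin n) ℝ)
    (E₀ : Matrix (Fin q) (Fin n) ℝ) (E : Fin r → Matrix (Fin q) (Fin n) ℝ)
    (Θ : Matrix (Fin n) (Fin q) ℝ)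
    (hdet : MeanSquareStable r (Ahat + Θ * E₀) (fun l => Chat l + Θ * E l))
    (Z : Matrix (Fin n) (Fin n) ℝ) (hZ : Z.PosSemidef)
    (hlyap : Z * Ahat + Ahatᵀ * Z + (∑ l, (Chat l)ᵀ * Z * Chat l)
        + (E₀ᵀ * E₀ + ∑ l, (E l)ᵀ * E l) = 0) :
    MeanSquareStable r Ahat Chat := by
  obtain ⟨P, hP, hLP⟩ := hdet
  have hPt : Pᵀ = P := by simpa using hP.isHermitian.eq
  have hN : ((Θᵀ * P)ᵀ * (Θᵀ * P) + ∑ l, (Θᵀ * P * Chat l)ᵀ * (Θᵀ * P * Chat l)).IsHermitian :=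
    ((posSemidef_transpose_mul_self _).add
      (posSemidef_sum _ fun l _ => posSemidef_transpose_mul_self _)).isHermitian
  obtain ⟨ε, hSN, hε⟩ :=
    ((hLP.eventually_sub_smul hN).filter_mono nhdsWithin_le_nhds).and
      (self_mem_nhdsWithin (s := Set.Ioi 0)) |>.exists
  refine ⟨Z + ε • P, PosDef.posSemidef_add hZ (hP.smul hε), ?_⟩
  change (-lyapunovOp Ahat Chat (Z + ε • P)).PosDef
  rw [neg_lyapunovOp_add_smul_eq Ahat Chat Θ E₀ E hlyap hPt ε]
  refine .posSemidef_add (.add (.add (posSemidef_transpose_mul_self _)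
    (posSemidef_sum _ fun l _ => posSemidef_transpose_mul_self _)) ?_) (hSN.smul hε)
  exact (posSemidef_sum _ fun l _ => hP.posSemidef.conjTranspose_mul_mul_same _).smul hε.le
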